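/- For every integer k with k ≠ 0 and k ≠ 1, the quotient of the additive group ℤ[1/k] by the subgroup (k−1)·ℤ[1/k] is a cyclic group of order |k−1|; equivalently, ℤ[1/k]/(k−1)ℤ[1/k] ≅ ℤ/(k−1)ℤ. -/

import Mathlib

/-!
`ℤ[1/k]` is the localization of `ℤ` away from `k`, and localization commutes with quotients:
`ℤ[1/k]/(k-1)` is the localization of `ℤ/(k-1)` away from `k`. Since `k ≡ 1 [ZMOD k-1]`, `k` is
already a unit in `ℤ/(k-1)`, so this localization is `ℤ/(k-1)` itself.
-/

theorem exists_mul_pow_eq_intCast_of_mem_closure_inv {K : Type*} [Field K] {k : ℤ}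
    (hk : (k : K) ≠ 0) {x : K} (hx : x ∈ Subring.closure {(k : K)⁻¹}) :
    ∃ (n : ℕ) (a : ℤ), x * (k : K) ^ n = a := by
  induction hx using Subring.closure_induction with
  | mem y hy =>
    rw [Set.mem_singleton_iff.mp hy]
    exact ⟨1, 1, by simp [hk]⟩
  | zero => exact ⟨0, 0, by simp⟩
  | one => exact ⟨0, 1, by simp⟩
  | add x y _ _ hx hy =>
    obtain ⟨m, a, ha⟩ := hx
    obtain ⟨n, b, hb⟩ := hy
    exact ⟨m + n, a * k ^ n + b * k ^ m, by
      push_cast; linear_combination (k : K) ^ n * ha + (k : K) ^ m * hb⟩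
  | neg x _ hx =>
    obtain ⟨m, a, ha⟩ := hx
    exact ⟨m, -a, by push_cast; linear_combination -ha⟩
  | mul x y _ _ hx hy =>
    obtain ⟨m, a, ha⟩ := hx
    obtain ⟨n, b, hb⟩ := hy
    exact ⟨m + n, a * b, by
      push_cast; linear_combination (y * (k : K) ^ n) * ha + (a : K) * hb⟩

theorem isLocalization_away_closure_inv {K : Type*} [Field K] [CharZero K] {k : ℤ} (hk : k ≠ 0) :
    IsLocalization.Away k (Subring.closure {(k : K)⁻¹}) := by
  have hkK : (k : K) ≠ 0 := Int.cast_ne_zero.mpr hk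
  refine IsLocalization.Away.mk k ?_ ?_ ?_
  · exact IsUnit.of_mul_eq_one ⟨(k : K)⁻¹, Subring.subset_closure rfl⟩
      (Subtype.ext (by simp [hkK]))
  · rintro ⟨x, hx⟩
    obtain ⟨n, a, h⟩ := exists_mul_pow_eq_intCast_of_mem_closure_inv hkK hx
    exact ⟨n, a, Subtype.ext (by simpa using h)⟩
  · intro a b h
    exact ⟨0, by simpa using congrArg Subtype.val h⟩

noncomputable def IsLocalization.Away.quotientEquivOfIsUnit {R S : Type*} [CommRing R]
    [CommRing S] [Algebra R S] (r : R) [IsLocalization.Away r S] (I : Ideal R)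
    (hr : IsUnit (Ideal.Quotient.mk I r)) :
    (R ⧸ I) ≃ₐ[R ⧸ I] S ⧸ I.map (algebraMap R S) :=
  IsLocalization.atUnits (R ⧸ I) (Algebra.algebraMapSubmonoid (R ⧸ I) (Submonoid.powers r)) (by
    rintro _ ⟨_, ⟨n, rfl⟩, rfl⟩
    exact (map_pow (Ideal.Quotient.mk I) r n).symm ▸ hr.pow n)

noncomputable def IsLocalization.Away.quotientSpanSubOneEquivZMod {S : Type*} [CommRing S]
    (k : ℤ) [IsLocalization.Away k S] :
    S ⧸ Ideal.span {((k - 1 : ℤ) : S)} ≃+* ZMod (k - 1).natAbs := by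
  have hk : Ideal.Quotient.mk (Ideal.span {k - 1}) k = 1 := by
    rw [← map_one (Ideal.Quotient.mk _), Ideal.Quotient.eq, Ideal.mem_span_singleton]
  have hspan : (Ideal.span {k - 1}).map (algebraMap ℤ S) = Ideal.span {((k - 1 : ℤ) : S)} := by
    rw [Ideal.map_span, Set.image_singleton, eq_intCast]
  exact (Ideal.quotEquivOfEq hspan).symm.trans <|
    (IsLocalization.Away.quotientEquivOfIsUnit k _ (hk ▸ isUnit_one)).toRingEquiv.symm.trans
      (Int.quotientSpanEquivZMod (k - 1))

theorem range_zsmulAddGroupHom_eq_span (S : Type*) [CommRing S] (a : ℤ) :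
    (zsmulAddGroupHom a : S →+ S).range = (Ideal.span {(a : S)}).toAddSubgroup := by
  ext x
  simp [Ideal.mem_span_singleton', zsmul_eq_mul, mul_comm]

theorem quotient_k_sub_one_iso_general (k : ℤ) (hk : k ≠ 0) :
    Nonempty
      (((Subring.closure {((k : ℚ))⁻¹} : Subring ℚ) ⧸
          (zsmulAddGroupHom (k - 1) :
            (Subring.closure {((k : ℚ))⁻¹} : Subring ℚ) →+
              (Subring.closure {((k : ℚ))⁻¹} : Subring ℚ)).range) ≃+
        ZMod (k - 1).natAbs) := by
  have := isLocalization_away_closure_inv (K := ℚ) hk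
  rw [range_zsmulAddGroupHom_eq_span]
  -- the additive group `S ⧸ I` of an ideal quotient is by definition `S ⧸ I.toAddSubgroup`
  exact ⟨(IsLocalization.Away.quotientSpanSubOneEquivZMod k).toAddEquiv⟩

/-- For `k ≠ 0, 1`, the quotient of the additive group `ℤ[1/k]` by the subgroup
`(k-1)·ℤ[1/k]` is cyclic of order `|k-1|`, i.e. isomorphic to `ℤ/(k-1)ℤ`. -/
theorem quotient_k_sub_one_iso (k : ℤ) (hk : k ≠ 0) (hk1 : k ≠ 1) :
    Nonempty
      (((Subring.closure {((k : ℚ))⁻¹} : Subring ℚ) ⧸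
          (zsmulAddGroupHom (k - 1) :
            (Subring.closure {((k : ℚ))⁻¹} : Subring ℚ) →+
              (Subring.closure {((k : ℚ))⁻¹} : Subring ℚ)).range) ≃+
        ZMod (k - 1).natAbs) :=
  quotient_k_sub_one_iso_general k hk
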